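/- Let q ≥ 1 and let S_1, …, S_m be 3-element subsets of {1,…,3q}, with S_i = {x_{i,1}, x_{i,2}, x_{i,3}}. Let H be the comb graph with spine path ρ_{1,1} — ρ_{1,2} — ρ_{2,1} — ρ_{2,2} — … — ρ_{m,1} — ρ_{m,2} and, for each i ∈ {1,…,m}, the two teeth ρ_{i,1} — a_i¹ — e_{i,1} — e_{i,2} — e_{i,3} — b_i¹ and ρ_{i,2} — a_i² — b_i². Color the vertices by c(a_i¹) = c(a_i²) = i, c(b_i¹) = c(b_i²) = m + i, c(e_{i,j}) = 2m + x_{i,j} for j ∈ {1,2,3}, and c(ρ_{i,j}) = 2m + 3q + 2(i−1) + j for j ∈ {1,2}, and let M be the multiset containing each color of {1, …, 4m + 3q} exactly once. Then (1) the bandwidth of H is at most 6, and (2) (H, c, M) has a motif solution if and only if there exists 𝒯 ⊆ {1,…,m} such that every element of {1,…,3q} belongs to exactly one set S_i with i ∈ 𝒯 (an exact cover by 3-sets). -/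

import Mathlib

/-- A motif solution of an instance `(G, c, M)`: a set `R` of vertices such that the
induced subgraph `G[R]` is connected and the multiset of colors of `R` equals `M`. -/
def IsMotifSolution {V C : Type*} (G : SimpleGraph V) (c : V → C) (M : Multiset C)
    (R : Finset V) : Prop :=
  (G.induce (R : Set V)).Connected ∧ Multiset.map c R.val = M

/-- The comb graph of Statement 10 on vertex set `Fin m × Fin 9`:
`(i,0) = ρ_{i,1}`, `(i,1) = ρ_{i,2}` (spine), `(i,2) = aᵢ¹`, `(i,3), (i,4), (i,5)` are
`e_{i,1}, e_{i,2}, e_{i,3}`, `(i,6) = bᵢ¹`, `(i,7) = aᵢ²`, `(i,8) = bᵢ²`.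
Edges: spine `ρ_{i,1}—ρ_{i,2}—ρ_{i+1,1}`, tooth `ρ_{i,1}—aᵢ¹—e_{i,1}—e_{i,2}—e_{i,3}—bᵢ¹`,
and tooth `ρ_{i,2}—aᵢ²—bᵢ²`. -/
def combRel (m : ℕ) (a b : Fin m × Fin 9) : Prop :=
  (a.1 = b.1 ∧ ((a.2.val = 0 ∧ b.2.val = 1) ∨ (a.2.val = 0 ∧ b.2.val = 2) ∨
    (a.2.val = 2 ∧ b.2.val = 3) ∨ (a.2.val = 3 ∧ b.2.val = 4) ∨
    (a.2.val = 4 ∧ b.2.val = 5) ∨ (a.2.val = 5 ∧ b.2.val = 6) ∨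
    (a.2.val = 1 ∧ b.2.val = 7) ∨ (a.2.val = 7 ∧ b.2.val = 8))) ∨
  (b.1.val = a.1.val + 1 ∧ a.2.val = 1 ∧ b.2.val = 0)

/-- The coloring of Statement 10: `c(aᵢ¹) = c(aᵢ²) = i`, `c(bᵢ¹) = c(bᵢ²) = m + i`,
`c(e_{i,j}) = 2m + x_{i,j}`, `c(ρ_{i,j}) = 2m + 3q + 2(i−1) + j` (colors written in
`{1, …, 4m+3q}`, indices one-based). -/
def combColor (m q : ℕ) (x : Fin m → Fin 3 → Fin (3 * q)) (v : Fin m × Fin 9) : ℕ :=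
  match v.2.val with
  | 0 => 2 * m + 3 * q + 2 * v.1.val + 1
  | 1 => 2 * m + 3 * q + 2 * v.1.val + 2
  | 2 => v.1.val + 1
  | 3 => 2 * m + (x v.1 0).val + 1
  | 4 => 2 * m + (x v.1 1).val + 1
  | 5 => 2 * m + (x v.1 2).val + 1
  | 6 => m + v.1.val + 1
  | 7 => v.1.val + 1
  | _ => m + v.1.val + 1

/-!
Laying out the blocks of nine vertices one after another, in the order
a¹, e₁, ρ₁, e₂, e₃, ρ₂, a², b¹, b² inside a block, every edge spans at most 3 positions except the
spine edges ρ_{i,2} — ρ_{i+1,1}, which span 6.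

In a motif solution `R` every colour occurs exactly once. The spine colours force the spine into
`R`, and the colours `i` and `m + i`, each shared by two vertices, force exactly one of `aᵢ¹, aᵢ²`
and at least one of `bᵢ¹, bᵢ²`. Since `G[R]` is connected, a vertex of a tooth drags its whole
path to the spine into `R`: so `bᵢ²` needs `aᵢ²`, and if `aᵢ¹ ∈ R` then `bᵢ¹` and with it the whole
long tooth is in `R`, while an `e`-vertex in `R` forces `aᵢ¹ ∈ R`. Hence the indices `i` with
`aᵢ¹ ∈ R` form an exact cover, each `e`-colour being used exactly once. Conversely, an exact cover
`T` gives the solution made of the spine, the long teeth over `T` and the short teeth elsewhere.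
-/

namespace SimpleGraph

variable {V : Type*} {G : SimpleGraph V} {R : Set V}

theorem mem_of_induce_connected_of_boundary (hR : (G.induce R).Connected) {S : Set V}
    {u v p : V} (hu : u ∈ R) (hv : v ∈ R) (huS : u ∈ S) (hvS : v ∉ S)
    (hp : ∀ a ∈ S, ∀ b ∉ S, G.Adj a b → b = p) : p ∈ R := by
  obtain ⟨w⟩ := hR.preconnected ⟨u, hu⟩ ⟨v, hv⟩
  obtain ⟨d, -, haS, hbS⟩ := w.exists_boundary_dart (Subtype.val ⁻¹' S) huS hvS
  rw [← hp _ haS _ hbS d.adj]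
  exact d.toProd.2.2

theorem induce_connected_of_parent {r : V} (hr : r ∈ R) (parent : V → V) (depth : V → ℕ)
    (h : ∀ v ∈ R, v ≠ r → parent v ∈ R ∧ G.Adj v (parent v) ∧ depth (parent v) < depth v) :
    (G.induce R).Connected := by
  have reach : ∀ n, ∀ v (hv : v ∈ R), depth v = n → (G.induce R).Reachable ⟨v, hv⟩ ⟨r, hr⟩ := by
    intro n
    induction n using Nat.strong_induction_on with
    | _ n ih =>
      intro v hv hn
      by_cases hvr : v = r
      · subst hvr; rfl
      obtain ⟨hpR, hadj, hlt⟩ := h v hv hvr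
      have hstep : (G.induce R).Adj ⟨v, hv⟩ ⟨parent v, hpR⟩ := hadj
      exact hstep.reachable.trans (ih _ (hn ▸ hlt) _ hpR rfl)
  have : Nonempty R := ⟨⟨r, hr⟩⟩
  exact connected_iff_exists_forall_reachable _ |>.mpr
    ⟨⟨r, hr⟩, fun ⟨v, hv⟩ => (reach _ v hv rfl).symm⟩

end SimpleGraph

theorem Finset.map_val_eq_iff_injOn {α β : Type*} {c : α → β} {R : Finset α} {M : Multiset β}
    (hM : M.Nodup) : R.val.map c = M ↔ Set.InjOn c R ∧ ∀ b, b ∈ M ↔ ∃ a ∈ R, c a = b := by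
  constructor
  · rintro rfl
    exact ⟨fun a ha b hb => Multiset.inj_on_of_nodup_map hM a ha b hb, fun b => by simp⟩
  · rintro ⟨hinj, hmem⟩
    refine (Multiset.Nodup.ext (R.nodup.map_on hinj) hM).2 fun b => ?_
    simp [hmem]

namespace IsMotifSolution

variable {V C : Type*} {G : SimpleGraph V} {c : V → C} {M : Multiset C} {R : Finset V}

theorem injOn (hR : IsMotifSolution G c M R) (hM : M.Nodup) : Set.InjOn c R :=
  ((Finset.map_val_eq_iff_injOn hM).1 hR.2).1

theorem exists_mem_color_eq (hR : IsMotifSolution G c M R) {b : C} (hb : b ∈ M) :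
    ∃ v ∈ R, c v = b := by
  rw [← hR.2] at hb
  simpa using hb

end IsMotifSolution

abbrev allColors (N : ℕ) : Multiset ℕ := (Multiset.range N).map (· + 1)

theorem nodup_allColors (N : ℕ) : (allColors N).Nodup :=
  (Multiset.nodup_range N).map fun _ _ => Nat.add_right_cancel

theorem mem_allColors {N k : ℕ} : k ∈ allColors N ↔ 0 < k ∧ k ≤ N := by
  simp only [Multiset.mem_map, Multiset.mem_range]
  exact ⟨by omega, fun h => ⟨k - 1, by omega, by omega⟩⟩

abbrev combGraph (m : ℕ) : SimpleGraph (Fin m × Fin 9) := SimpleGraph.fromRel (combRel m)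

def toothOrder : Fin 9 ≃ Fin 9 :=
  ⟨![2, 5, 0, 1, 3, 4, 7, 6, 8], ![2, 3, 0, 4, 5, 1, 7, 6, 8], by decide, by decide⟩

def combLayout (m : ℕ) : Fin m × Fin 9 ≃ Fin (9 * m) :=
  (Equiv.prodCongr (Equiv.refl _) toothOrder).trans
    (finProdFinEquiv.trans (finCongr (Nat.mul_comm m 9)))

theorem combLayout_val (m : ℕ) (v : Fin m × Fin 9) :
    (combLayout m v : ℕ) = 9 * v.1 + toothOrder v.2 := by
  simp [combLayout, finProdFinEquiv]
  omega

theorem combLayout_le_of_combRel {m : ℕ} {u v : Fin m × Fin 9} (h : combRel m u v) :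
    (combLayout m u : ℕ) ≤ combLayout m v + 6 ∧ (combLayout m v : ℕ) ≤ combLayout m u + 6 := by
  obtain ⟨i, k⟩ := u
  obtain ⟨i', k'⟩ := v
  rw [combLayout_val, combLayout_val]
  simp only [combRel, Fin.ext_iff] at h
  fin_cases k <;> fin_cases k' <;> simp [toothOrder] at h ⊢ <;> omega

theorem combLayout_le_of_adj {m : ℕ} {u v : Fin m × Fin 9} (h : (combGraph m).Adj u v) :
    (combLayout m u : ℕ) ≤ combLayout m v + 6 := by
  rcases (SimpleGraph.fromRel_adj _ _ _).mp h with ⟨-, h | h⟩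
  exacts [(combLayout_le_of_combRel h).1, (combLayout_le_of_combRel h).2]

section Colors

variable {m q : ℕ} (x : Fin m → Fin 3 → Fin (3 * q))

def eVertex (i : Fin m) (j : Fin 3) : Fin m × Fin 9 := (i, ⟨j + 3, by omega⟩)

theorem combColor_eVertex (i : Fin m) (j : Fin 3) :
    combColor m q x (eVertex i j) = 2 * m + x i j + 1 := by
  fin_cases j <;> rfl

theorem combColor_mem_allColors (v : Fin m × Fin 9) :
    combColor m q x v ∈ allColors (4 * m + 3 * q) := by
  obtain ⟨i, k⟩ := v
  have := i.isLt
  have := fun j => (x i j).isLt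
  rw [mem_allColors]
  fin_cases k <;> simp [combColor] <;> grind

theorem combColor_eq_spine_iff {v : Fin m × Fin 9} {i : Fin m} {r : ℕ} (hr : r < 2) :
    combColor m q x v = 2 * m + 3 * q + 2 * i + r + 1 ↔ v = (i, ⟨r, by omega⟩) := by
  constructor
  · obtain ⟨i', k⟩ := v
    have := fun j => (x i' j).isLt
    fin_cases k <;> simp [combColor, Prod.ext_iff, Fin.ext_iff] <;> grind
  · rintro rfl
    interval_cases r <;> rfl

theorem combColor_eq_a_iff {v : Fin m × Fin 9} {i : Fin m} :
    combColor m q x v = i + 1 ↔ v = (i, 2) ∨ v = (i, 7) := by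
  constructor
  · obtain ⟨i', k⟩ := v
    have := fun j => (x i' j).isLt
    fin_cases k <;> simp [combColor, Prod.ext_iff, Fin.ext_iff] <;> grind
  · rintro (rfl | rfl) <;> rfl

theorem combColor_eq_b_iff {v : Fin m × Fin 9} {i : Fin m} :
    combColor m q x v = m + i + 1 ↔ v = (i, 6) ∨ v = (i, 8) := by
  constructor
  · obtain ⟨i', k⟩ := v
    have := fun j => (x i' j).isLt
    fin_cases k <;> simp [combColor, Prod.ext_iff, Fin.ext_iff] <;> grind
  · rintro (rfl | rfl) <;> rfl

theorem combColor_eq_e_iff {v : Fin m × Fin 9} {w : Fin (3 * q)} :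
    combColor m q x v = 2 * m + w + 1 ↔ ∃ i j, v = eVertex i j ∧ x i j = w := by
  constructor
  · obtain ⟨i, k⟩ := v
    have := fun j => (x i j).isLt
    fin_cases k <;> simp only [combColor] <;> intro h <;>
      first
      | omega
      | exact ⟨i, 0, rfl, Fin.ext (by omega)⟩
      | exact ⟨i, 1, rfl, Fin.ext (by omega)⟩
      | exact ⟨i, 2, rfl, Fin.ext (by omega)⟩
  · rintro ⟨i, j, rfl, rfl⟩
    exact combColor_eVertex x i j

end Colors

section CoverSolution

variable {m q : ℕ} {x : Fin m → Fin 3 → Fin (3 * q)} {T : Finset (Fin m)}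

-- The comb as a tree rooted at `(0, 0)`; the value at the root itself is never used.
def combParent (v : Fin m × Fin 9) : Fin m × Fin 9 :=
  if v.2 = 0 then (⟨v.1 - 1, by have := v.1.isLt; omega⟩, 1)
  else (v.1, ![0, 0, 0, 2, 3, 4, 5, 1, 7] v.2)

def combDepth (v : Fin m × Fin 9) : ℕ := 9 * v.1 + ![0, 1, 1, 2, 3, 4, 5, 2, 3] v.2

-- The spine, the long teeth `ρ_{i,1} aᵢ¹ e_{i,1} e_{i,2} e_{i,3} bᵢ¹` for `i ∈ T` and the short
-- teeth `aᵢ² bᵢ²` for `i ∉ T`.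
def coverSolution (T : Finset (Fin m)) : Finset (Fin m × Fin 9) :=
  {v | (v.2 : ℕ) ≤ 1 ∨ (v.1 ∈ T ∧ 2 ≤ (v.2 : ℕ) ∧ (v.2 : ℕ) ≤ 6) ∨ (v.1 ∉ T ∧ 7 ≤ (v.2 : ℕ))}

theorem coverSolution_connected (T : Finset (Fin m)) (hm : 0 < m) :
    ((combGraph m).induce (coverSolution T : Set (Fin m × Fin 9))).Connected := by
  refine SimpleGraph.induce_connected_of_parent (r := (⟨0, hm⟩, 0)) (by simp [coverSolution])
    combParent combDepth ?_
  rintro ⟨i, k⟩ hv hroot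
  fin_cases k <;>
    simp [combParent, combDepth, coverSolution, SimpleGraph.fromRel_adj, combRel, Prod.ext_iff,
      Fin.ext_iff] at hv hroot ⊢ <;> omega

theorem eVertex_mem_coverSolution_iff {i : Fin m} {j : Fin 3} :
    eVertex i j ∈ coverSolution T ↔ i ∈ T := by
  fin_cases j <;> simp [eVertex, coverSolution]

theorem eVertex_eq_of_combColor_eq (hx : ∀ i, Function.Injective (x i))
    (hT : ∀ w, ∃! i, i ∈ T ∧ ∃ j, x i j = w) {i : Fin m} {j : Fin 3} {v : Fin m × Fin 9}
    (hu : eVertex i j ∈ coverSolution T) (hv : v ∈ coverSolution T)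
    (h : combColor m q x (eVertex i j) = combColor m q x v) : eVertex i j = v := by
  obtain ⟨i', j', rfl, hj'⟩ := (combColor_eq_e_iff x).1 (h.symm.trans (combColor_eVertex x i j))
  obtain rfl : i' = i :=
    (hT _).unique ⟨eVertex_mem_coverSolution_iff.1 hv, j', hj'⟩
      ⟨eVertex_mem_coverSolution_iff.1 hu, j, rfl⟩
  rw [hx i' hj']

theorem injOn_combColor_coverSolution (hx : ∀ i, Function.Injective (x i))
    (hT : ∀ w, ∃! i, i ∈ T ∧ ∃ j, x i j = w) :
    Set.InjOn (combColor m q x) (coverSolution T) := by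
  rintro ⟨i, k⟩ hu v hv huv
  fin_cases k
  · exact ((combColor_eq_spine_iff x (i := i) (r := 0) (by norm_num)).1 huv.symm).symm
  · exact ((combColor_eq_spine_iff x (i := i) (r := 1) (by norm_num)).1 huv.symm).symm
  · rcases (combColor_eq_a_iff x).1 huv.symm with rfl | rfl <;>
      simp_all [coverSolution]
  · exact eVertex_eq_of_combColor_eq hx hT (j := 0) hu hv huv
  · exact eVertex_eq_of_combColor_eq hx hT (j := 1) hu hv huv
  · exact eVertex_eq_of_combColor_eq hx hT (j := 2) hu hv huv
  · rcases (combColor_eq_b_iff x).1 huv.symm with rfl | rfl <;>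
      simp_all [coverSolution]
  · rcases (combColor_eq_a_iff x).1 huv.symm with rfl | rfl <;>
      simp_all [coverSolution]
  · rcases (combColor_eq_b_iff x).1 huv.symm with rfl | rfl <;>
      simp_all [coverSolution]

theorem exists_mem_coverSolution_combColor_eq (hT : ∀ w, ∃! i, i ∈ T ∧ ∃ j, x i j = w) {k : ℕ}
    (hk : k ∈ allColors (4 * m + 3 * q)) : ∃ v ∈ coverSolution T, combColor m q x v = k := by
  obtain ⟨n, hn, rfl⟩ := Multiset.mem_map.1 hk
  rw [Multiset.mem_range] at hn
  by_cases ha : n < m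
  · by_cases hi : (⟨n, ha⟩ : Fin m) ∈ T
    · exact ⟨(⟨n, ha⟩, 2), by simp [coverSolution, hi], rfl⟩
    · exact ⟨(⟨n, ha⟩, 7), by simp [coverSolution, hi], rfl⟩
  by_cases hb : n < 2 * m
  · by_cases hi : (⟨n - m, by omega⟩ : Fin m) ∈ T
    · exact ⟨(⟨n - m, by omega⟩, 6), by simp [coverSolution, hi], by simp [combColor]; omega⟩
    · exact ⟨(⟨n - m, by omega⟩, 8), by simp [coverSolution, hi], by simp [combColor]; omega⟩
  by_cases he : n < 2 * m + 3 * q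
  · obtain ⟨i, ⟨hi, j, hj⟩, -⟩ := hT ⟨n - 2 * m, by omega⟩
    refine ⟨eVertex i j, eVertex_mem_coverSolution_iff.2 hi, ?_⟩
    rw [combColor_eVertex, hj, Fin.val_mk]
    omega
  have hr : (n - 2 * m - 3 * q) % 2 < 2 := Nat.mod_lt _ (by norm_num)
  refine ⟨(⟨(n - 2 * m - 3 * q) / 2, by omega⟩, ⟨(n - 2 * m - 3 * q) % 2, by omega⟩),
    by simp [coverSolution]; omega, ?_⟩
  rw [(combColor_eq_spine_iff x hr).2 rfl, Fin.val_mk]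
  omega

theorem isMotifSolution_coverSolution (hq : 1 ≤ q) (hx : ∀ i, Function.Injective (x i))
    (hT : ∀ w, ∃! i, i ∈ T ∧ ∃ j, x i j = w) :
    IsMotifSolution (combGraph m) (combColor m q x) (allColors (4 * m + 3 * q))
      (coverSolution T) := by
  obtain ⟨i, -, -⟩ := hT ⟨0, by omega⟩
  refine ⟨coverSolution_connected T i.pos, (Finset.map_val_eq_iff_injOn (nodup_allColors _)).2
    ⟨injOn_combColor_coverSolution hx hT, fun k => ⟨exists_mem_coverSolution_combColor_eq hT, ?_⟩⟩⟩
  rintro ⟨v, -, rfl⟩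
  exact combColor_mem_allColors x v

end CoverSolution

section MotifSolution

variable {m q : ℕ} {x : Fin m → Fin 3 → Fin (3 * q)} {R : Finset (Fin m × Fin 9)}

theorem long_tooth_mem_of_connected
    (hR : ((combGraph m).induce (R : Set (Fin m × Fin 9))).Connected)
    {i : Fin m} (h0 : (i, 0) ∈ R) {j k : ℕ} (hj : 2 ≤ j) (hjk : j ≤ k) (hk : k ≤ 6)
    (hkR : (i, ⟨k, by omega⟩) ∈ R) : (i, ⟨j, by omega⟩) ∈ R := by
  rcases hjk.eq_or_lt with rfl | hjk
  · exact hkR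
  refine SimpleGraph.mem_of_induce_connected_of_boundary hR
    (S := {v | v.1 = i ∧ j < v.2 ∧ v.2 ≤ 6}) hkR h0 ⟨rfl, hjk, hk⟩ (by simp) ?_
  rintro ⟨ia, ka⟩ ⟨rfl, hja, hka⟩ ⟨ib, kb⟩ hb hadj
  simp only [SimpleGraph.fromRel_adj, combRel, Prod.ext_iff, Fin.ext_iff, Set.mem_ofPred_eq,
    ne_eq, not_and] at hja hka hb hadj ⊢
  omega

theorem short_tooth_mem_of_connected
    (hR : ((combGraph m).induce (R : Set (Fin m × Fin 9))).Connected)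
    {i : Fin m} (h1 : (i, 1) ∈ R) (h8 : (i, 8) ∈ R) : (i, 7) ∈ R := by
  refine SimpleGraph.mem_of_induce_connected_of_boundary hR (S := {(i, 8)}) h8 h1 rfl (by simp) ?_
  rintro _ rfl ⟨ib, kb⟩ hb hadj
  simp only [SimpleGraph.fromRel_adj, combRel, Prod.ext_iff, Fin.ext_iff, Set.mem_singleton_iff,
    ne_eq, not_and] at hb hadj ⊢
  omega

namespace IsMotifSolution

theorem spine_mem
    (hR : IsMotifSolution (combGraph m) (combColor m q x) (allColors (4 * m + 3 * q)) R)
    (i : Fin m) {r : ℕ} (hr : r < 2) : (i, ⟨r, by omega⟩) ∈ R := by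
  obtain ⟨v, hv, hcv⟩ := hR.exists_mem_color_eq
    (mem_allColors.2 ⟨by omega, by omega⟩ : 2 * m + 3 * q + 2 * i + r + 1 ∈ _)
  rwa [(combColor_eq_spine_iff x hr).1 hcv] at hv

theorem a_mem_iff
    (hR : IsMotifSolution (combGraph m) (combColor m q x) (allColors (4 * m + 3 * q)) R)
    (i : Fin m) : (i, 2) ∈ R ↔ (i, 7) ∉ R := by
  obtain ⟨v, hv, hcv⟩ := hR.exists_mem_color_eq
    (mem_allColors.2 ⟨by omega, by omega⟩ : (i : ℕ) + 1 ∈ _)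
  constructor
  · intro h2 h7
    simpa using hR.injOn (nodup_allColors _) h2 h7 rfl
  · intro h7
    rcases (combColor_eq_a_iff x).1 hcv with rfl | rfl
    exacts [hv, absurd hv h7]

theorem b_mem
    (hR : IsMotifSolution (combGraph m) (combColor m q x) (allColors (4 * m + 3 * q)) R)
    (i : Fin m) : (i, 6) ∈ R ∨ (i, 8) ∈ R := by
  obtain ⟨v, hv, hcv⟩ := hR.exists_mem_color_eq
    (mem_allColors.2 ⟨by omega, by omega⟩ : m + i + 1 ∈ _)
  rcases (combColor_eq_b_iff x).1 hcv with rfl | rfl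
  exacts [.inl hv, .inr hv]

theorem eVertex_mem_iff
    (hR : IsMotifSolution (combGraph m) (combColor m q x) (allColors (4 * m + 3 * q)) R)
    (i : Fin m) (j : Fin 3) : eVertex i j ∈ R ↔ (i, 2) ∈ R := by
  have h0 : (i, 0) ∈ R := hR.spine_mem i (r := 0) (by norm_num)
  constructor
  · exact long_tooth_mem_of_connected hR.1 h0 (j := 2) (k := j + 3) le_rfl (by omega) (by omega)
  · intro h2
    have h8 : (i, 8) ∉ R := fun h8 => (hR.a_mem_iff i).1 h2
      (short_tooth_mem_of_connected hR.1 (hR.spine_mem i (r := 1) (by norm_num)) h8)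
    exact long_tooth_mem_of_connected hR.1 h0 (j := j + 3) (k := 6) (by omega) (by omega) le_rfl
      ((hR.b_mem i).resolve_right h8)

theorem exists_exactCover
    (hR : IsMotifSolution (combGraph m) (combColor m q x) (allColors (4 * m + 3 * q)) R) :
    ∃ T : Finset (Fin m), ∀ w, ∃! i, i ∈ T ∧ ∃ j, x i j = w := by
  refine ⟨Finset.univ.filter fun i => (i, 2) ∈ R, fun w => ?_⟩
  obtain ⟨v, hv, hcv⟩ := hR.exists_mem_color_eq
    (mem_allColors.2 ⟨by omega, by omega⟩ : 2 * m + w + 1 ∈ _)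
  obtain ⟨i, j, rfl, rfl⟩ := (combColor_eq_e_iff x).1 hcv
  refine ⟨i, ⟨by simpa using (hR.eVertex_mem_iff i j).1 hv, j, rfl⟩, ?_⟩
  rintro i' ⟨hi', j', hj'⟩
  have hi'R : eVertex i' j' ∈ R := (hR.eVertex_mem_iff i' j').2 (by simpa using hi')
  exact congrArg Prod.fst <| hR.injOn (nodup_allColors _) hi'R hv <| by
    rw [combColor_eVertex, combColor_eVertex, hj']

end IsMotifSolution

end MotifSolution

/-- (1) The comb graph `H` has bandwidth at most 6, and (2) with `M`
containing each color of `{1, …, 4m+3q}` exactly once, the instance `(H, c, M)` has a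
motif solution iff the sets `S_i = {x_{i,1}, x_{i,2}, x_{i,3}}` admit an exact cover by
3-sets of `{1, …, 3q}`. -/
theorem stmt_10 (q m : ℕ) (hq : 1 ≤ q) (x : Fin m → Fin 3 → Fin (3 * q))
    (hx : ∀ i : Fin m, Function.Injective (x i)) :
    (∃ f : (Fin m × Fin 9) ≃ Fin (9 * m), ∀ u v : Fin m × Fin 9,
      (SimpleGraph.fromRel (combRel m)).Adj u v →
        (f u).val - (f v).val ≤ 6 ∧ (f v).val - (f u).val ≤ 6) ∧
    ((∃ R : Finset (Fin m × Fin 9),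
      IsMotifSolution (SimpleGraph.fromRel (combRel m)) (combColor m q x)
        ((Multiset.range (4 * m + 3 * q)).map (· + 1)) R) ↔
    ∃ T : Finset (Fin m), ∀ w : Fin (3 * q),
      ∃! i : Fin m, i ∈ T ∧ ∃ j : Fin 3, x i j = w) := by
  refine ⟨⟨combLayout m, fun u v huv => ?_⟩, ⟨fun ⟨R, hR⟩ => ?_, fun ⟨T, hT⟩ => ?_⟩⟩
  · have := combLayout_le_of_adj huv
    have := combLayout_le_of_adj huv.symm
    omega
  · exact hR.exists_exactCover
  · exact ⟨coverSolution T, isMotifSolution_coverSolution hq hx hT⟩
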